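/- arXiv:1703.10846 — 6 statements merged into one kernel-verified Lean document; each statement's English description precedes it below -/
import Mathlib

section
/- Let r, s, n, m be positive integers and let R ∈ T_{r,m}, C ∈ T_{s,m}, S ∈ T_{n,m}. If the set R_{R,C,S} of r×s partial Latin rectangles based on n symbols with row type R, column type C and symbol type S is non-empty, then C ⪯ R*, S ⪯ C* and R ⪯ S*. -/
open Finset

/-- `E` is (the entry set of) an `r × s` partial Latin rectangle based on `n` symbols:
no two distinct triples agree in both their first and second coordinates, in both their
first and third coordinates, or in both their second and third coordinates. -/
def IsPLR {r s n : ℕ} (E : Finset (Fin r × Fin s × Fin n)) : Prop :=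
  ∀ e ∈ E, ∀ e' ∈ E, e ≠ e' →
    ¬(e.1 = e'.1 ∧ e.2.1 = e'.2.1) ∧
    ¬(e.1 = e'.1 ∧ e.2.2 = e'.2.2) ∧
    ¬(e.2.1 = e'.2.1 ∧ e.2.2 = e'.2.2)

/-- The number of entries of `E` in row `i`. -/
def rowType {r s n : ℕ} (E : Finset (Fin r × Fin s × Fin n)) (i : Fin r) : ℕ :=
  (E.filter (fun e => e.1 = i)).card

/-- The number of entries of `E` in column `j`. -/
def colType {r s n : ℕ} (E : Finset (Fin r × Fin s × Fin n)) (j : Fin s) : ℕ :=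
  (E.filter (fun e => e.2.1 = j)).card

/-- The number of occurrences of symbol `k` in `E`. -/
def symType {r s n : ℕ} (E : Finset (Fin r × Fin s × Fin n)) (k : Fin n) : ℕ :=
  (E.filter (fun e => e.2.2 = k)).card

/-- The multiset of components of a tuple. -/
def tupleMultiset {k : ℕ} (T : Fin k → ℕ) : Multiset ℕ := Finset.univ.val.map T

/-- The sum of the `j` largest elements of a multiset of naturals. -/
def descSum (A : Multiset ℕ) (j : ℕ) : ℕ := ((A.sort (· ≤ ·)).reverse.take j).sum

/-- `A` is majorized by `B`: for every `j`, the sum of the `j` largest elements of `A`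
is at most the sum of the `j` largest elements of `B`. -/
def Majorized (A B : Multiset ℕ) : Prop := ∀ j, descSum A j ≤ descSum B j

/-- The conjugate of a tuple `T ∈ T_{k,m}`: its `i`-th component (for `i = 1,…,m`)
is the number of indices `j` with `T j ≥ i`. -/
def conjTuple {k : ℕ} (T : Fin k → ℕ) (m : ℕ) (i : Fin m) : ℕ :=
  (Finset.univ.filter (fun j => (i : ℕ) + 1 ≤ T j)).card

/-! Fix `j` and let `J` be a set of `j` columns carrying the largest column counts. Row `i`
meets the columns of `J` in at most `min (R i) j` cells, and summing over rows,
`∑ i, min (R i) j` is exactly the sum of the first `j` components of `R*`; hence `C ⪯ R*`.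
Since any two coordinates of an entry determine it, the same argument applies to the pairs
(column, symbol) and (symbol, row). -/

lemma List.Sublist.sum_le_sum_take {M : Type*} [AddCommMonoid M] [PartialOrder M]
    [IsOrderedAddMonoid M] {l₁ l₂ : List M} (h : l₁.Sublist l₂) (hl₂ : l₂.Pairwise (· ≥ ·)) :
    l₁.sum ≤ (l₂.take l₁.length).sum := by
  induction h with
  | slnil => simp
  | @cons l₁ l₂ a h ih =>
    obtain ⟨ha, hl₂⟩ := List.pairwise_cons.mp hl₂
    refine (ih hl₂).trans ?_
    cases hlen : l₁.length with
    | zero => simp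
    | succ k =>
      have hk : k < l₂.length := by have := h.length_le; omega
      rw [List.take_succ_cons, List.sum_take_succ _ _ hk, List.sum_cons, add_comm]
      exact add_le_add_left (ha _ (List.getElem_mem hk)) _
  | cons_cons a h ih =>
    simpa using add_le_add_right (ih (List.pairwise_cons.mp hl₂).2) a

lemma Multiset.exists_le_map_eq_of_le_map {α β : Type*} {f : α → β} {s : Multiset α}
    {B : Multiset β} (h : B ≤ s.map f) : ∃ t ≤ s, t.map f = B := by
  induction s using Quotient.inductionOn
  induction B using Quotient.inductionOn
  obtain ⟨l, hperm, hsub⟩ := Multiset.coe_le.mp h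
  obtain ⟨t, ht, rfl⟩ := List.sublist_map_iff.mp hsub
  exact ⟨t, Multiset.coe_le.mpr ht.subperm, Multiset.coe_eq_coe.mpr hperm⟩

lemma sum_le_descSum {A B : Multiset ℕ} (hBA : B ≤ A) {j : ℕ} (hj : Multiset.card B ≤ j) :
    B.sum ≤ descSum A j := by
  set l := (A.sort (· ≤ ·)).reverse
  have hl : (l : Multiset ℕ) = A := by simp [l]
  have hsorted : l.Pairwise (· ≥ ·) := List.pairwise_reverse.mpr (Multiset.pairwise_sort _ _)
  induction B using Quotient.inductionOn with | h b => ?_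
  obtain ⟨b', hperm, hsub⟩ := Multiset.coe_le.mp (hl ▸ hBA)
  calc (b : Multiset ℕ).sum = b'.sum := by simp [hperm.sum_eq]
    _ ≤ (l.take b'.length).sum := hsub.sum_le_sum_take hsorted
    _ ≤ (l.take j).sum :=
      (List.take_sublist_take_left (by simpa [hperm.length_eq] using hj)).sum_le_sum
        fun _ _ => Nat.zero_le _

lemma exists_le_card_le_sum_eq_descSum (A : Multiset ℕ) (j : ℕ) :
    ∃ B ≤ A, Multiset.card B ≤ j ∧ B.sum = descSum A j := by
  refine ⟨((A.sort (· ≤ ·)).reverse.take j : List ℕ), ?_, by simp, rfl⟩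
  conv_rhs => rw [← Multiset.sort_eq A (· ≤ ·), ← Multiset.coe_reverse]
  exact Multiset.coe_le.mpr (List.take_sublist _ _).subperm

section TupleMultiset

variable {k : ℕ} (T : Fin k → ℕ) (j : ℕ)

lemma sum_le_descSum_tupleMultiset {J : Finset (Fin k)} (hJ : #J ≤ j) :
    ∑ x ∈ J, T x ≤ descSum (tupleMultiset T) j :=
  sum_le_descSum (Multiset.map_le_map (val_le_iff.mpr (subset_univ J))) (by simpa using hJ)

lemma exists_card_le_sum_eq_descSum_tupleMultiset :
    ∃ J : Finset (Fin k), #J ≤ j ∧ ∑ x ∈ J, T x = descSum (tupleMultiset T) j := by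
  obtain ⟨B, hB, hcard, hsum⟩ := exists_le_card_le_sum_eq_descSum (tupleMultiset T) j
  obtain ⟨t, ht, rfl⟩ := Multiset.exists_le_map_eq_of_le_map hB
  exact ⟨⟨t, Multiset.nodup_of_le ht univ.nodup⟩, by simpa using hcard, hsum⟩

end TupleMultiset

lemma sum_conjTuple_filter_lt {a : ℕ} (A : Fin a → ℕ) {m : ℕ} (hA : ∀ i, A i ≤ m) (j : ℕ) :
    ∑ t ∈ ({t | (t : ℕ) < j} : Finset (Fin m)), conjTuple A m t = ∑ i, min (A i) j := by
  simp only [conjTuple, card_filter]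
  rw [sum_comm]
  refine sum_congr rfl fun i _ => ?_
  rw [← card_filter, filter_filter]
  calc #{t : Fin m | (t : ℕ) < j ∧ (t : ℕ) + 1 ≤ A i}
        = #{t : Fin m | (t : ℕ) < min j (A i)} := by simp only [lt_min_iff, Nat.add_one_le_iff]
    _ = min (A i) j := by rw [Fin.card_filter_val_lt]; have := hA i; omega

lemma sum_min_le_descSum_conjTuple {a : ℕ} (A : Fin a → ℕ) {m : ℕ} (hA : ∀ i, A i ≤ m) (j : ℕ) :
    ∑ i, min (A i) j ≤ descSum (tupleMultiset (conjTuple A m)) j :=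
  sum_conjTuple_filter_lt A hA j ▸ sum_le_descSum_tupleMultiset (conjTuple A m) j
    (J := {t : Fin m | (t : ℕ) < j}) (by rw [Fin.card_filter_val_lt]; exact min_le_right _ _)

section Fibres

variable {α : Type*} {a b : ℕ} (E : Finset α) (f : α → Fin a) (g : α → Fin b)

lemma card_filter_mem_le_sum_min (hfg : Set.InjOn (fun e => (f e, g e)) (E : Set α))
    {J : Finset (Fin b)} {j : ℕ} (hJ : #J ≤ j) :
    #{e ∈ E | g e ∈ J} ≤ ∑ i, min #{e ∈ E | f e = i} j := by
  rw [card_eq_sum_card_fiberwise (f := f) (t := univ) fun _ _ => mem_univ _]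
  refine sum_le_sum fun i _ => le_min (card_le_card fun e => by simp +contextual) ?_
  refine (card_le_card_of_injOn g (fun e he => by simp_all) fun e he e' he' hg => ?_).trans hJ
  simp only [mem_coe, mem_filter] at he he'
  exact hfg he.1.1 he'.1.1 (Prod.ext (he.2.trans he'.2.symm) hg)

theorem majorized_of_injOn (hfg : Set.InjOn (fun e => (f e, g e)) (E : Set α)) {m : ℕ}
    (hm : ∀ i, #{e ∈ E | f e = i} ≤ m) :
    Majorized (tupleMultiset fun x => #{e ∈ E | g e = x})
      (tupleMultiset (conjTuple (fun i => #{e ∈ E | f e = i}) m)) := by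
  intro j
  obtain ⟨J, hJ, hsum⟩ :=
    exists_card_le_sum_eq_descSum_tupleMultiset (fun x => #{e ∈ E | g e = x}) j
  calc descSum _ j = ∑ x ∈ J, #{e ∈ E | g e = x} := hsum.symm
    _ = #{e ∈ E | g e ∈ J} := sum_card_fiberwise_eq_card_filter E J g
    _ ≤ ∑ i, min #{e ∈ E | f e = i} j := card_filter_mem_le_sum_min E f g hfg hJ
    _ ≤ _ := sum_min_le_descSum_conjTuple _ hm j

end Fibres

section IsPLR

variable {r s n : ℕ} {E : Finset (Fin r × Fin s × Fin n)}

lemma IsPLR.injOn_row_col (hE : IsPLR E) :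
    Set.InjOn (fun e => (e.1, e.2.1)) (E : Set (Fin r × Fin s × Fin n)) :=
  fun e he e' he' h => by_contra fun hne => (hE e he e' he' hne).1 (Prod.ext_iff.mp h)

lemma IsPLR.injOn_col_sym (hE : IsPLR E) :
    Set.InjOn (fun e => (e.2.1, e.2.2)) (E : Set (Fin r × Fin s × Fin n)) :=
  fun e he e' he' h => by_contra fun hne => (hE e he e' he' hne).2.2 (Prod.ext_iff.mp h)

lemma IsPLR.injOn_sym_row (hE : IsPLR E) :
    Set.InjOn (fun e => (e.2.2, e.1)) (E : Set (Fin r × Fin s × Fin n)) :=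
  fun e he e' he' h => by_contra fun hne => (hE e he e' he' hne).2.1 (Prod.ext_iff.mp h).symm

end IsPLR

theorem stmt0_general (r s n m : ℕ)
    (R : Fin r → ℕ) (C : Fin s → ℕ) (S : Fin n → ℕ)
    (hR : ∑ i, R i = m) (hC : ∑ j, C j = m) (hS : ∑ k, S k = m)
    (hne : ∃ E : Finset (Fin r × Fin s × Fin n),
      IsPLR E ∧ rowType E = R ∧ colType E = C ∧ symType E = S) :
    Majorized (tupleMultiset C) (tupleMultiset (conjTuple R m)) ∧
    Majorized (tupleMultiset S) (tupleMultiset (conjTuple C m)) ∧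
    Majorized (tupleMultiset R) (tupleMultiset (conjTuple S m)) := by
  obtain ⟨E, hE, rfl, rfl, rfl⟩ := hne
  have le_of_sum_eq {k : ℕ} {T : Fin k → ℕ} (hT : ∑ i, T i = m) (i : Fin k) : T i ≤ m :=
    hT ▸ single_le_sum (fun _ _ => Nat.zero_le _) (mem_univ i)
  exact ⟨majorized_of_injOn E _ _ hE.injOn_row_col (le_of_sum_eq hR),
    majorized_of_injOn E _ _ hE.injOn_col_sym (le_of_sum_eq hC),
    majorized_of_injOn E _ _ hE.injOn_sym_row (le_of_sum_eq hS)⟩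

theorem stmt0 (r s n m : ℕ) (hr : 0 < r) (hs : 0 < s) (hn : 0 < n) (hm : 0 < m)
    (R : Fin r → ℕ) (C : Fin s → ℕ) (S : Fin n → ℕ)
    (hR : ∑ i, R i = m) (hC : ∑ j, C j = m) (hS : ∑ k, S k = m)
    (hne : ∃ E : Finset (Fin r × Fin s × Fin n),
      IsPLR E ∧ rowType E = R ∧ colType E = C ∧ symType E = S) :
    Majorized (tupleMultiset C) (tupleMultiset (conjTuple R m)) ∧
    Majorized (tupleMultiset S) (tupleMultiset (conjTuple C m)) ∧
    Majorized (tupleMultiset R) (tupleMultiset (conjTuple S m)) :=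
  stmt0_general r s n m R C S hR hC hS hne
end

section
/- Let r ≤ r', s ≤ s', n ≤ n' be positive integers, and let (R,C,S) ∈ T_{r,m}×T_{s,m}×T_{n,m} and (R',C',S') ∈ T_{r',m}×T_{s',m}×T_{n',m} be triples of tuples such that R and R' have the same structure, C and C' have the same structure, and S and S' have the same structure. Then |R_{R,C,S}| = |R_{R',C',S'}|. -/
/-!
Only the rows, columns and symbols that actually occur matter. If two tuples have the same
structure, the shorter one embeds into the longer one by a value-preserving injection whose image
contains every nonzero component (match the fibres of each nonzero value bijectively and send the
zero components anywhere into the zeros of the longer tuple). Applying these injections to rows,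
columns and symbols maps partial Latin rectangles of the first type bijectively onto those of the
second: a rectangle of the second type has all its entries in nonempty rows, columns and symbol
classes, hence inside the image.
-/

open Finset

/-- The multiset of nonzero components of a tuple (its "structure"). -/
def nzMultiset {k : ℕ} (T : Fin k → ℕ) : Multiset ℕ :=
  (Finset.univ.val.map T).filter (· ≠ 0)

theorem count_nzMultiset {k v : ℕ} (T : Fin k → ℕ) (hv : v ≠ 0) :
    (nzMultiset T).count v = Fintype.card {i // T i = v} := by
  classical
  rw [nzMultiset, Multiset.count_filter, if_pos hv, Multiset.count_map, Fintype.card_subtype]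
  simp [Finset.card, Finset.filter_val, eq_comm]

theorem card_nzMultiset_add_card_zeros {k : ℕ} (T : Fin k → ℕ) :
    Multiset.card (nzMultiset T) + Fintype.card {i // T i = 0} = k := by
  classical
  rw [nzMultiset, Multiset.filter_map, Multiset.card_map, Fintype.card_subtype]
  have := Finset.card_filter_add_card_filter_not (s := univ) (fun i : Fin k => T i ≠ 0)
  simp only [not_not, card_univ, Fintype.card_fin] at this
  exact this

section SameStructure

variable {a b : ℕ} {f : Fin a → ℕ} {g : Fin b → ℕ}

theorem card_fiber_eq_of_nzMultiset_eq (h : nzMultiset f = nzMultiset g) {v : ℕ} (hv : v ≠ 0) :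
    Fintype.card {i // f i = v} = Fintype.card {j // g j = v} := by
  rw [← count_nzMultiset f hv, ← count_nzMultiset g hv, h]

theorem card_fiber_le_of_nzMultiset_eq (hab : a ≤ b) (h : nzMultiset f = nzMultiset g) (v : ℕ) :
    Fintype.card {i // f i = v} ≤ Fintype.card {j // g j = v} := by
  rcases eq_or_ne v 0 with rfl | hv
  · have hf := card_nzMultiset_add_card_zeros f
    have hg := card_nzMultiset_add_card_zeros g
    rw [h] at hf
    omega
  · exact (card_fiber_eq_of_nzMultiset_eq h hv).le

theorem exists_embedding_extend_eq_of_nzMultiset_eq (hab : a ≤ b)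
    (h : nzMultiset f = nzMultiset g) :
    ∃ φ : Fin a ↪ Fin b, g = Function.extend φ f 0 := by
  have e v : {i // f i = v} ↪ {j // g j = v} :=
    (Function.Embedding.nonempty_of_card_le (card_fiber_le_of_nzMultiset_eq hab h v)).some
  let φ : Fin a ↪ Fin b := (Equiv.sigmaFiberEquiv f).symm.toEmbedding.trans
    ((Function.Embedding.sigmaMap (Function.Embedding.refl ℕ) e).trans
      (Equiv.sigmaFiberEquiv g).toEmbedding)
  have hφ : ∀ v (x : {i // f i = v}), φ x = e v x := by
    rintro v ⟨i, rfl⟩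
    rfl
  refine ⟨φ, funext fun j => ?_⟩
  by_cases hj : ∃ i, φ i = j
  · obtain ⟨i, rfl⟩ := hj
    rw [φ.injective.extend_apply, hφ (f i) ⟨i, rfl⟩]
    exact (e (f i) ⟨i, rfl⟩).2
  · rw [Function.extend_apply' _ _ _ hj]
    by_contra hgj
    obtain ⟨x, hx⟩ := ((Fintype.bijective_iff_injective_and_card (e (g j))).2
      ⟨(e (g j)).injective, card_fiber_eq_of_nzMultiset_eq h hgj⟩).2 ⟨j, rfl⟩
    exact hj ⟨x, by rw [hφ, hx]⟩

end SameStructure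

theorem card_filter_map_eq_extend {α β ι κ : Type*} [DecidableEq ι] [DecidableEq κ]
    {m : α ↪ β} {p : α → ι} {q : β → κ} {f : ι ↪ κ} (hpq : ∀ x, q (m x) = f (p x))
    (E : Finset α) :
    (fun k => ((E.map m).filter (q · = k)).card) =
      Function.extend f (fun i => (E.filter (p · = i)).card) 0 := by
  funext k
  by_cases hk : ∃ i, f i = k
  · obtain ⟨i, rfl⟩ := hk
    simp [f.injective.extend_apply, Finset.filter_map, hpq]
  · rw [Function.extend_apply' _ _ _ hk, Pi.zero_apply, Finset.card_eq_zero,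
      Finset.filter_map, Finset.map_eq_empty, Finset.filter_eq_empty_iff]
    exact fun x _ hx => hk ⟨p x, by simp only [Function.comp_apply, hpq] at hx; exact hx⟩

theorem mem_range_of_extend_ne_zero {ι κ : Type*} {f : ι → κ} {T : ι → ℕ} {k : κ}
    (hk : Function.extend f T 0 k ≠ 0) : ∃ i, f i = k := by
  by_contra h
  exact hk (Function.extend_apply' _ _ _ h)

section Reindex

variable {r s n r' s' n' : ℕ}
  (fR : Fin r ↪ Fin r') (fC : Fin s ↪ Fin s') (fS : Fin n ↪ Fin n')

theorem isPLR_map_iff (E : Finset (Fin r × Fin s × Fin n)) :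
    IsPLR (E.map (fR.prodMap (fC.prodMap fS))) ↔ IsPLR E := by
  have hinj : Function.Injective (Prod.map fR (Prod.map fC fS)) :=
    (fR.prodMap (fC.prodMap fS)).injective
  simp only [IsPLR, Finset.forall_mem_map, Function.Embedding.coe_prodMap, hinj.ne_iff,
    Prod.map_fst, Prod.map_snd, fR.injective.eq_iff, fC.injective.eq_iff, fS.injective.eq_iff]

theorem rowType_map (E : Finset (Fin r × Fin s × Fin n)) :
    rowType (E.map (fR.prodMap (fC.prodMap fS))) = Function.extend fR (rowType E) 0 :=
  card_filter_map_eq_extend (p := Prod.fst) (q := Prod.fst) (f := fR) (fun _ => rfl) E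

theorem colType_map (E : Finset (Fin r × Fin s × Fin n)) :
    colType (E.map (fR.prodMap (fC.prodMap fS))) = Function.extend fC (colType E) 0 :=
  card_filter_map_eq_extend (p := Prod.fst ∘ Prod.snd) (q := Prod.fst ∘ Prod.snd) (f := fC)
    (fun _ => rfl) E

theorem symType_map (E : Finset (Fin r × Fin s × Fin n)) :
    symType (E.map (fR.prodMap (fC.prodMap fS))) = Function.extend fS (symType E) 0 :=
  card_filter_map_eq_extend (p := Prod.snd ∘ Prod.snd) (q := Prod.snd ∘ Prod.snd) (f := fS)
    (fun _ => rfl) E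

theorem card_plr_eq_of_extend {R : Fin r → ℕ} {C : Fin s → ℕ} {S : Fin n → ℕ}
    {R' : Fin r' → ℕ} {C' : Fin s' → ℕ} {S' : Fin n' → ℕ}
    (hR : R' = Function.extend fR R 0) (hC : C' = Function.extend fC C 0)
    (hS : S' = Function.extend fS S 0) :
    Nat.card {E : Finset (Fin r × Fin s × Fin n) //
      IsPLR E ∧ rowType E = R ∧ colType E = C ∧ symType E = S} =
    Nat.card {E : Finset (Fin r' × Fin s' × Fin n') //
      IsPLR E ∧ rowType E = R' ∧ colType E = C' ∧ symType E = S'} := by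
  set m := fR.prodMap (fC.prodMap fS)
  have map_iff (E : Finset (Fin r × Fin s × Fin n)) :
      (IsPLR (E.map m) ∧ rowType (E.map m) = R' ∧ colType (E.map m) = C' ∧
        symType (E.map m) = S') ↔
      (IsPLR E ∧ rowType E = R ∧ colType E = C ∧ symType E = S) := by
    rw [isPLR_map_iff, rowType_map, colType_map, symType_map, hR, hC, hS,
      (Function.extend_injective fR.injective 0).eq_iff,
      (Function.extend_injective fC.injective 0).eq_iff,
      (Function.extend_injective fS.injective 0).eq_iff]
  refine Nat.card_eq_of_bijective (fun E => ⟨E.1.map m, (map_iff E.1).2 E.2⟩) ⟨?_, ?_⟩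
  · intro E F h
    exact Subtype.ext (Finset.map_injective m (congrArg Subtype.val h))
  · rintro ⟨E', hE'⟩
    have hsub : E' ⊆ Finset.univ.map m := by
      intro e he
      have hr : rowType E' e.1 ≠ 0 :=
        Finset.card_ne_zero_of_mem (Finset.mem_filter.2 ⟨he, rfl⟩)
      have hc : colType E' e.2.1 ≠ 0 :=
        Finset.card_ne_zero_of_mem (Finset.mem_filter.2 ⟨he, rfl⟩)
      have hs : symType E' e.2.2 ≠ 0 :=
        Finset.card_ne_zero_of_mem (Finset.mem_filter.2 ⟨he, rfl⟩)
      rw [hE'.2.1, hR] at hr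
      rw [hE'.2.2.1, hC] at hc
      rw [hE'.2.2.2, hS] at hs
      obtain ⟨i, hi⟩ := mem_range_of_extend_ne_zero hr
      obtain ⟨j, hj⟩ := mem_range_of_extend_ne_zero hc
      obtain ⟨k, hk⟩ := mem_range_of_extend_ne_zero hs
      exact Finset.mem_map.2 ⟨(i, j, k), Finset.mem_univ _, by simp [m, hi, hj, hk]⟩
    obtain ⟨E, -, rfl⟩ := Finset.subset_map_iff.1 hsub
    exact ⟨⟨E, (map_iff E).1 hE'⟩, rfl⟩

end Reindex

theorem stmt2_general (r s n r' s' n' : ℕ)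
    (hrr : r ≤ r') (hss : s ≤ s') (hnn : n ≤ n')
    (R : Fin r → ℕ) (C : Fin s → ℕ) (S : Fin n → ℕ)
    (R' : Fin r' → ℕ) (C' : Fin s' → ℕ) (S' : Fin n' → ℕ)
    (hRs : nzMultiset R = nzMultiset R')
    (hCs : nzMultiset C = nzMultiset C')
    (hSs : nzMultiset S = nzMultiset S') :
    Nat.card {E : Finset (Fin r × Fin s × Fin n) //
      IsPLR E ∧ rowType E = R ∧ colType E = C ∧ symType E = S} =
    Nat.card {E : Finset (Fin r' × Fin s' × Fin n') //
      IsPLR E ∧ rowType E = R' ∧ colType E = C' ∧ symType E = S'} := by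
  obtain ⟨fR, hR⟩ := exists_embedding_extend_eq_of_nzMultiset_eq hrr hRs
  obtain ⟨fC, hC⟩ := exists_embedding_extend_eq_of_nzMultiset_eq hss hCs
  obtain ⟨fS, hS⟩ := exists_embedding_extend_eq_of_nzMultiset_eq hnn hSs
  exact card_plr_eq_of_extend fR fC fS hR hC hS

theorem stmt2 (r s n r' s' n' m : ℕ)
    (hr : 0 < r) (hs : 0 < s) (hn : 0 < n)
    (hrr : r ≤ r') (hss : s ≤ s') (hnn : n ≤ n')
    (R : Fin r → ℕ) (C : Fin s → ℕ) (S : Fin n → ℕ)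
    (R' : Fin r' → ℕ) (C' : Fin s' → ℕ) (S' : Fin n' → ℕ)
    (hR : ∑ i, R i = m) (hC : ∑ j, C j = m) (hS : ∑ k, S k = m)
    (hR' : ∑ i, R' i = m) (hC' : ∑ j, C' j = m) (hS' : ∑ k, S' k = m)
    (hRs : nzMultiset R = nzMultiset R')
    (hCs : nzMultiset C = nzMultiset C')
    (hSs : nzMultiset S = nzMultiset S') :
    Nat.card {E : Finset (Fin r × Fin s × Fin n) //
      IsPLR E ∧ rowType E = R ∧ colType E = C ∧ symType E = S} =
    Nat.card {E : Finset (Fin r' × Fin s' × Fin n') //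
      IsPLR E ∧ rowType E = R' ∧ colType E = C' ∧ symType E = S'} :=
  stmt2_general r s n r' s' n' hrr hss hnn R C S R' C' S' hRs hCs hSs
end

section
/- For all positive integers r, s, n, the number of r×s partial Latin rectangles based on n symbols of size 3 satisfies 6·|R_{r,s,n:3}| = rsn·(r²s²n² − 3r²sn − 3rs²n − 3rsn² + 6rsn + 6rs + 6rn + 6sn + 2r² + 2s² + 2n² − 12r − 12s − 12n + 14). -/
open Finset

/-- The number of `r × s` partial Latin rectangles based on `n` symbols of size `m`. -/
noncomputable def numPLR (r s n m : ℕ) : ℕ :=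
  Nat.card {E : Finset (Fin r × Fin s × Fin n) // IsPLR E ∧ E.card = m}

/-!
Call two cells compatible when they agree in at most one coordinate. A partial Latin rectangle is
a clique of this compatibility graph, so six times the number of size-3 ones counts ordered
triangles. With `N = rsn` cells, each cell is incompatible with `K = r + s + n - 2` cells (itself
included). For compatible `a`, `b` these two sets of `K` cells are disjoint, unless `a` and `b`
share a coordinate, in which case they meet in exactly two cells; so `a` and `b` have
`N - 2K` common neighbours, plus two if they share a coordinate. A cell has `N - K` neighbours,
`(s - 1)(n - 1) + (r - 1)(n - 1) + (r - 1)(s - 1)` of which share a coordinate with it, and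
summing gives `N ((N - K)(N - 2K) + 2 ((s - 1)(n - 1) + (r - 1)(n - 1) + (r - 1)(s - 1)))`.
All these counts are sums of products of coordinate-equality indicators, evaluated one
coordinate at a time.
-/

theorem boole_and {R : Type*} [MulZeroOneClass R] (P Q : Prop) [Decidable P] [Decidable Q] :
    (if P ∧ Q then 1 else 0 : R) = (if P then 1 else 0) * (if Q then 1 else 0) := by
  rw [ite_zero_mul_ite_zero, mul_one]

namespace SimpleGraph

variable {V : Type*} [Fintype V] (G : SimpleGraph V) [DecidableRel G.Adj]

theorem card_orderedTriangles_eq_sum :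
    #{t : V × V × V | G.Adj t.1 t.2.1 ∧ G.Adj t.1 t.2.2 ∧ G.Adj t.2.1 t.2.2} =
      ∑ a, ∑ b, if G.Adj a b then #{c | G.Adj a c ∧ G.Adj b c} else 0 := by
  simp only [card_filter, Fintype.sum_prod_type, ite_and, sum_ite_irrel, sum_const_zero]

variable [DecidableEq V]

theorem card_filter_triple_eq_of_card_eq_three {s : Finset V} (hs : #s = 3) :
    #{t : V × V × V | {t.1, t.2.1, t.2.2} = s} = 6 := by
  obtain ⟨x, y, z, hxy, hxz, hyz, rfl⟩ := card_eq_three.1 hs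
  have hperm : ({t : V × V × V | {t.1, t.2.1, t.2.2} = ({x, y, z} : Finset V)} : Finset _) =
      {(x, y, z), (x, z, y), (y, x, z), (y, z, x), (z, x, y), (z, y, x)} := by
    ext ⟨a, b, c⟩
    simp only [mem_filter, mem_univ, true_and, mem_insert, mem_singleton, Prod.mk.injEq]
    constructor
    · intro habc
      have hx : x ∈ ({a, b, c} : Finset V) := habc ▸ by simp
      have hy : y ∈ ({a, b, c} : Finset V) := habc ▸ by simp
      have hz : z ∈ ({a, b, c} : Finset V) := habc ▸ by simp
      have ha : a ∈ ({x, y, z} : Finset V) := habc ▸ by simp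
      have hb : b ∈ ({x, y, z} : Finset V) := habc ▸ by simp
      have hc : c ∈ ({x, y, z} : Finset V) := habc ▸ by simp
      simp only [mem_insert, mem_singleton] at ha hb hc hx hy hz
      grind
    · rintro (⟨rfl, rfl, rfl⟩ | ⟨rfl, rfl, rfl⟩ | ⟨rfl, rfl, rfl⟩ | ⟨rfl, rfl, rfl⟩ |
        ⟨rfl, rfl, rfl⟩ | ⟨rfl, rfl, rfl⟩) <;>
      ext <;> simp only [mem_insert, mem_singleton] <;> tauto
  rw [hperm]
  simp [*, Prod.ext_iff]

theorem six_mul_card_cliqueFinset_three :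
    6 * #(G.cliqueFinset 3) =
      #{t : V × V × V | G.Adj t.1 t.2.1 ∧ G.Adj t.1 t.2.2 ∧ G.Adj t.2.1 t.2.2} := by
  have hmaps : ∀ t ∈ ({t : V × V × V | G.Adj t.1 t.2.1 ∧ G.Adj t.1 t.2.2 ∧ G.Adj t.2.1 t.2.2} :
      Finset _), ({t.1, t.2.1, t.2.2} : Finset V) ∈ G.cliqueFinset 3 := by
    intro t ht
    simpa [mem_cliqueFinset_iff, is3Clique_triple_iff] using ht
  rw [card_eq_sum_card_fiberwise hmaps, mul_comm, ← smul_eq_mul, ← sum_const]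
  refine sum_congr rfl fun s hs => ?_
  rw [filter_filter, ← card_filter_triple_eq_of_card_eq_three (mem_cliqueFinset_iff.1 hs).card_eq]
  congr 1
  refine filter_congr fun t _ => (and_iff_right_of_imp fun ht => ?_).symm
  rw [← is3Clique_triple_iff, ← mem_cliqueFinset_iff, ht]
  exact hs

end SimpleGraph

def latinGraph (α β γ : Type*) : SimpleGraph (α × β × γ) where
  Adj p q := ¬(p.1 = q.1 ∧ p.2.1 = q.2.1) ∧ ¬(p.1 = q.1 ∧ p.2.2 = q.2.2) ∧
    ¬(p.2.1 = q.2.1 ∧ p.2.2 = q.2.2)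
  symm := ⟨fun p q h => by simpa only [eq_comm] using h⟩
  loopless := ⟨fun p h => h.1 ⟨rfl, rfl⟩⟩

instance {α β γ : Type*} [DecidableEq α] [DecidableEq β] [DecidableEq γ] :
    DecidableRel (latinGraph α β γ).Adj := fun p q =>
  inferInstanceAs (Decidable (¬(p.1 = q.1 ∧ p.2.1 = q.2.1) ∧ ¬(p.1 = q.1 ∧ p.2.2 = q.2.2) ∧
    ¬(p.2.1 = q.2.1 ∧ p.2.2 = q.2.2)))

theorem isPLR_iff_isClique {r s n : ℕ} (E : Finset (Fin r × Fin s × Fin n)) :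
    IsPLR E ↔ (latinGraph (Fin r) (Fin s) (Fin n)).IsClique (E : Set (Fin r × Fin s × Fin n)) :=
  Iff.rfl

theorem numPLR_eq_card_cliqueFinset (r s n m : ℕ) :
    numPLR r s n m = #((latinGraph (Fin r) (Fin s) (Fin n)).cliqueFinset m) := by
  classical
  rw [numPLR, Nat.card_eq_fintype_card, Fintype.card_subtype]
  congr 1
  ext E
  simp [isPLR_iff_isClique, SimpleGraph.mem_cliqueFinset_iff, SimpleGraph.isNClique_iff]

namespace latinGraph

variable {α β γ : Type*} [DecidableEq α] [DecidableEq β] [DecidableEq γ]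

def eqInd {ι : Type*} [DecidableEq ι] (x y : ι) : ℤ := if x = y then 1 else 0

-- Inclusion–exclusion for the event that at least two of the three coordinates agree.
theorem adj_indicator (p q : α × β × γ) :
    (if (latinGraph α β γ).Adj p q then 1 else 0 : ℤ) =
      1 - eqInd p.1 q.1 * eqInd p.2.1 q.2.1 - eqInd p.1 q.1 * eqInd p.2.2 q.2.2
        - eqInd p.2.1 q.2.1 * eqInd p.2.2 q.2.2
        + 2 * (eqInd p.1 q.1 * eqInd p.2.1 q.2.1 * eqInd p.2.2 q.2.2) := by
  obtain ⟨p1, p2, p3⟩ := p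
  obtain ⟨q1, q2, q3⟩ := q
  by_cases h1 : p1 = q1 <;> by_cases h2 : p2 = q2 <;> by_cases h3 : p3 = q3 <;>
    simp [latinGraph, eqInd, h1, h2, h3]

variable [Fintype α] [Fintype β] [Fintype γ]

theorem card_commonNeighbors {a b : α × β × γ} (hab : (latinGraph α β γ).Adj a b) :
    (#{c | (latinGraph α β γ).Adj a c ∧ (latinGraph α β γ).Adj b c} : ℤ) =
      Fintype.card (α × β × γ) - 2 * (Fintype.card α + Fintype.card β + Fintype.card γ - 2)
        + 2 * (eqInd a.1 b.1 + eqInd a.2.1 b.2.1 + eqInd a.2.2 b.2.2) := by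
  rw [natCast_card_filter]
  simp only [boole_and, adj_indicator]
  obtain ⟨a1, a2, a3⟩ := a
  obtain ⟨b1, b2, b3⟩ := b
  simp only [Fintype.sum_prod_type]
  simp only [latinGraph, not_and] at hab
  simp only [eqInd, mul_ite, ite_mul, mul_one, one_mul, mul_zero, zero_mul, mul_add, add_mul,
    mul_sub, sub_mul, Int.reduceMul, sum_add_distrib, sum_sub_distrib, sum_ite_irrel, sum_ite_eq,
    mem_univ, if_true, sum_const_zero, sum_const, card_univ, Int.nsmul_eq_mul, Fintype.card_prod,
    Nat.cast_mul]
  split_ifs <;> simp_all <;> ring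

theorem card_orderedTriangles :
    (#{t : (α × β × γ) × (α × β × γ) × (α × β × γ) | (latinGraph α β γ).Adj t.1 t.2.1 ∧
        (latinGraph α β γ).Adj t.1 t.2.2 ∧ (latinGraph α β γ).Adj t.2.1 t.2.2} : ℤ) =
      Fintype.card (α × β × γ) *
        ((Fintype.card (α × β × γ) - (Fintype.card α + Fintype.card β + Fintype.card γ - 2)) *
          (Fintype.card (α × β × γ) - 2 * (Fintype.card α + Fintype.card β + Fintype.card γ - 2))
          + 2 * ((Fintype.card β - 1) * (Fintype.card γ - 1)
            + (Fintype.card α - 1) * (Fintype.card γ - 1)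
            + (Fintype.card α - 1) * (Fintype.card β - 1))) := by
  rw [SimpleGraph.card_orderedTriangles_eq_sum]
  push_cast
  have hcn : ∀ a b : α × β × γ,
      (if (latinGraph α β γ).Adj a b then
        (#{c | (latinGraph α β γ).Adj a c ∧ (latinGraph α β γ).Adj b c} : ℤ) else 0) =
      (if (latinGraph α β γ).Adj a b then 1 else 0) *
        (Fintype.card (α × β × γ) - 2 * (Fintype.card α + Fintype.card β + Fintype.card γ - 2)
          + 2 * (eqInd a.1 b.1 + eqInd a.2.1 b.2.1 + eqInd a.2.2 b.2.2)) := by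
    intro a b
    split_ifs with hab
    · rw [card_commonNeighbors hab, one_mul]
    · rw [zero_mul]
  simp only [hcn, adj_indicator, Fintype.sum_prod_type]
  simp only [eqInd, mul_ite, ite_mul, mul_one, one_mul, mul_zero, zero_mul, mul_add, add_mul,
    mul_sub, sub_mul, Int.reduceMul, sum_add_distrib, sum_sub_distrib, sum_ite_irrel, sum_ite_eq,
    mem_univ, if_true, sum_const_zero, sum_const, card_univ, Int.nsmul_eq_mul, Fintype.card_prod,
    Nat.cast_mul]
  ring

end latinGraph

theorem stmt5_general (r s n : ℕ) :
    (6 : ℤ) * numPLR r s n 3 =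
      (r : ℤ) * s * n *
        ((r : ℤ) ^ 2 * s ^ 2 * n ^ 2 - 3 * r ^ 2 * s * n - 3 * r * s ^ 2 * n
          - 3 * r * s * n ^ 2 + 6 * r * s * n + 6 * r * s + 6 * r * n + 6 * s * n
          + 2 * r ^ 2 + 2 * s ^ 2 + 2 * n ^ 2 - 12 * r - 12 * s - 12 * n + 14) := by
  have h := congrArg (Nat.cast : ℕ → ℤ)
    (latinGraph (Fin r) (Fin s) (Fin n)).six_mul_card_cliqueFinset_three
  push_cast at h
  rw [numPLR_eq_card_cliqueFinset, h, latinGraph.card_orderedTriangles]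
  simp only [Fintype.card_prod, Fintype.card_fin]
  push_cast
  ring

theorem stmt5 (r s n : ℕ) (hr : 0 < r) (hs : 0 < s) (hn : 0 < n) :
    (6 : ℤ) * numPLR r s n 3 =
      (r : ℤ) * s * n *
        ((r : ℤ) ^ 2 * s ^ 2 * n ^ 2 - 3 * r ^ 2 * s * n - 3 * r * s ^ 2 * n
          - 3 * r * s * n ^ 2 + 6 * r * s * n + 6 * r * s + 6 * r * n + 6 * s * n
          + 2 * r ^ 2 + 2 * s ^ 2 + 2 * n ^ 2 - 12 * r - 12 * s - 12 * n + 14) :=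
  stmt5_general r s n
end

section
/- For all positive integers r, s, n, the number of r×s partial Latin rectangles based on n symbols of size 4 satisfies 24·|R_{r,s,n:4}| = rsn·(σ(3,3,3) − 6σ(3,2,2) + 12σ(2,2,2) + 11σ(3,1,1) + 30σ(2,2,1) − 60σ(2,1,1) − 6σ(3,0,0) − 36σ(2,1,0) − 28σ(1,1,1) + 72σ(2,0,0) + 198σ(1,1,0) − 228σ(1,0,0) + 198). -/
open Finset

/-- `sig r s n a b c` is the sum of the distinct monomials `r^a' * s^b' * n^c'` as
`(a',b',c')` ranges over the distinct permutations of `(a,b,c)`. -/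
def sig (r s n : ℤ) (a b c : ℕ) : ℤ :=
  ∑ p ∈ ({(a, b, c), (a, c, b), (b, a, c), (b, c, a), (c, a, b), (c, b, a)} :
      Finset (ℕ × ℕ × ℕ)),
    r ^ p.1 * s ^ p.2.1 * n ^ p.2.2

/-!
Ordering the four entries of a partial Latin rectangle turns `24 · |R_{r,s,n:4}|` into the number
of triples of maps `(a, b, c) : Fin 4 → [r] × [s] × [n]` such that any two positions differ in at
least two of the three coordinates. Whether a triple has this property depends only on the three
equality patterns (set partitions of the four positions) that `a`, `b`, `c` induce, and a partition
with `k` blocks is induced by exactly `m (m - 1) ⋯ (m - k + 1)` maps into an `m`-set. Enumerating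
the 637 admissible triples among the `15³` triples of partitions of `Fin 4` and tallying their
block counts turns the count into a sum of products of falling factorials; expanding these gives
the polynomial.
-/

theorem Nat.cast_descFactorial_eq_prod_range_sub {R : Type*} [CommRing R] (n k : ℕ) :
    (n.descFactorial k : R) = ∏ i ∈ range k, ((n : R) - i) := by
  induction k with
  | zero => simp
  | succ k ih =>
    rw [Nat.descFactorial_succ, prod_range_succ, ← ih, mul_comm]
    rcases le_or_gt k n with h | h
    · push_cast [h]; ring
    · simp [Nat.descFactorial_eq_zero_iff_lt.2 h]

section FirstIndex

variable {ι β : Type*} [Fintype ι] [LinearOrder ι] [DecidableEq β]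

/-- `firstIndex g` encodes the partition of `ι` into the fibres of `g`. -/
def firstIndex (g : ι → β) (i : ι) : ι :=
  (univ.filter fun j => g j = g i).min' ⟨i, by simp⟩

/-- Encodings of partitions of `ι`: each block is sent to its least element. -/
def IsFirstIndexMap (p : ι → ι) : Prop :=
  (∀ i, p (p i) = p i) ∧ ∀ i, p i ≤ i

instance (p : ι → ι) : Decidable (IsFirstIndexMap p) := by
  unfold IsFirstIndexMap; infer_instance

def blockCount (p : ι → ι) : ℕ :=
  #{i | p i = i}

theorem apply_firstIndex (g : ι → β) (i : ι) : g (firstIndex g i) = g i :=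
  (mem_filter.1 (min'_mem (univ.filter fun j => g j = g i) ⟨i, by simp⟩)).2

theorem firstIndex_le_of_apply_eq (g : ι → β) {i j : ι} (h : g j = g i) : firstIndex g i ≤ j :=
  min'_le _ _ (by simp [h])

theorem firstIndex_le (g : ι → β) (i : ι) : firstIndex g i ≤ i :=
  firstIndex_le_of_apply_eq g rfl

theorem firstIndex_eq_firstIndex_iff (g : ι → β) (i j : ι) :
    firstIndex g i = firstIndex g j ↔ g i = g j := by
  refine ⟨fun h => by rw [← apply_firstIndex g i, h, apply_firstIndex g j], fun h => ?_⟩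
  exact le_antisymm (firstIndex_le_of_apply_eq g ((apply_firstIndex g j).trans h.symm))
    (firstIndex_le_of_apply_eq g ((apply_firstIndex g i).trans h))

theorem isFirstIndexMap_firstIndex (g : ι → β) : IsFirstIndexMap (firstIndex g) :=
  ⟨fun i => (firstIndex_eq_firstIndex_iff g _ _).2 (apply_firstIndex g i), firstIndex_le g⟩

theorem firstIndex_eq_of_isFirstIndexMap {p : ι → ι} (hp : IsFirstIndexMap p) {g : ι → β}
    (hg : ∀ i j, g i = g j ↔ p i = p j) : firstIndex g = p := by
  funext i
  refine le_antisymm (firstIndex_le_of_apply_eq g ((hg _ _).2 (hp.1 i))) (le_min' _ _ _ ?_)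
  intro j hj
  rw [mem_filter] at hj
  calc p i = p j := ((hg j i).1 hj.2).symm
    _ ≤ j := hp.2 j

/-- A map `g` with `firstIndex g = p` is the same as an injective map on the blocks of `p`,
represented by their least elements. -/
theorem card_firstIndex_eq [Fintype β] {p : ι → ι} (hp : IsFirstIndexMap p) :
    #{g : ι → β | firstIndex g = p} = (Fintype.card β).descFactorial (blockCount p) := by
  calc #{g : ι → β | firstIndex g = p} = Fintype.card ({i // p i = i} ↪ β) := by
        refine card_bij' (fun g hg => ⟨fun i => g i, fun i j hij => Subtype.ext ?_⟩)
          (fun e _ i => e ⟨p i, hp.1 i⟩) (fun _ _ => mem_univ _) ?_ ?_ ?_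
        · rw [mem_filter] at hg
          have hij' := (firstIndex_eq_firstIndex_iff g _ _).2 hij
          rwa [hg.2, i.2, j.2] at hij'
        · intro e _
          rw [mem_filter]
          refine ⟨mem_univ _, firstIndex_eq_of_isFirstIndexMap hp fun i j => ?_⟩
          rw [e.injective.eq_iff, Subtype.mk.injEq]
        · intro g hg
          rw [mem_filter] at hg
          funext i
          show g (p i) = g i
          rw [← firstIndex_eq_firstIndex_iff g, hg.2, hp.1]
        · intro e _
          ext i
          exact congrArg e (Subtype.ext i.2)
    _ = (Fintype.card β).descFactorial (blockCount p) := by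
        rw [Fintype.card_embedding_eq, Fintype.card_subtype, blockCount]

end FirstIndex

def IsLatinTriple {ι α β γ : Type*} (a : ι → α) (b : ι → β) (c : ι → γ) : Prop :=
  (fun i => (a i, b i)).Injective ∧ (fun i => (a i, c i)).Injective ∧
    (fun i => (b i, c i)).Injective

instance {ι α β γ : Type*} [Fintype ι] [DecidableEq ι] [DecidableEq α] [DecidableEq β]
    [DecidableEq γ] (a : ι → α) (b : ι → β) (c : ι → γ) : Decidable (IsLatinTriple a b c) := by
  unfold IsLatinTriple; infer_instance

section LatinTriples

variable {ι α β γ : Type*}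

theorem injective_pair_iff {a : ι → α} {b : ι → β} :
    (fun i => (a i, b i)).Injective ↔ ∀ i j, a i = a j → b i = b j → i = j := by
  simp only [Function.Injective, Prod.mk.injEq, and_imp]

theorem isLatinTriple_iff_forall {a : ι → α} {b : ι → β} {c : ι → γ} :
    IsLatinTriple a b c ↔ (∀ i j, a i = a j → b i = b j → i = j) ∧
      (∀ i j, a i = a j → c i = c j → i = j) ∧ ∀ i j, b i = b j → c i = c j → i = j := by
  simp only [IsLatinTriple, injective_pair_iff]

theorem isLatinTriple_firstIndex_iff [Fintype ι] [LinearOrder ι] [DecidableEq α] [DecidableEq β]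
    [DecidableEq γ] {a : ι → α} {b : ι → β} {c : ι → γ} :
    IsLatinTriple (firstIndex a) (firstIndex b) (firstIndex c) ↔ IsLatinTriple a b c := by
  simp only [isLatinTriple_iff_forall, firstIndex_eq_firstIndex_iff]

variable (ι) [Fintype ι] [LinearOrder ι]

def latinKernels : Finset ((ι → ι) × (ι → ι) × (ι → ι)) :=
  let firstIndexMaps : Finset (ι → ι) := {p | IsFirstIndexMap p}
  {p ∈ firstIndexMaps ×ˢ firstIndexMaps ×ˢ firstIndexMaps | IsLatinTriple p.1 p.2.1 p.2.2}

variable {ι}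

def blockCounts (p : (ι → ι) × (ι → ι) × (ι → ι)) : ℕ × ℕ × ℕ :=
  (blockCount p.1, blockCount p.2.1, blockCount p.2.2)

theorem card_isLatinTriple_eq_sum [Fintype α] [Fintype β] [Fintype γ] [DecidableEq α]
    [DecidableEq β] [DecidableEq γ] :
    #{q : (ι → α) × (ι → β) × (ι → γ) | IsLatinTriple q.1 q.2.1 q.2.2} =
      ∑ p ∈ latinKernels ι, (Fintype.card α).descFactorial (blockCounts p).1 *
        ((Fintype.card β).descFactorial (blockCounts p).2.1 *
          (Fintype.card γ).descFactorial (blockCounts p).2.2) := by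
  let kernel (q : (ι → α) × (ι → β) × (ι → γ)) : (ι → ι) × (ι → ι) × (ι → ι) :=
    (firstIndex q.1, firstIndex q.2.1, firstIndex q.2.2)
  have kernel_mem : ∀ q ∈ ({q | IsLatinTriple q.1 q.2.1 q.2.2} : Finset _),
      kernel q ∈ latinKernels ι := by
    intro q hq
    simp only [latinKernels, mem_filter, mem_product, mem_univ, true_and] at hq ⊢
    exact ⟨⟨isFirstIndexMap_firstIndex _, isFirstIndexMap_firstIndex _,
      isFirstIndexMap_firstIndex _⟩, isLatinTriple_firstIndex_iff.2 hq⟩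
  rw [card_eq_sum_card_fiberwise kernel_mem]
  refine sum_congr rfl fun p hp => ?_
  simp only [latinKernels, mem_filter, mem_product, mem_univ, true_and] at hp
  obtain ⟨⟨h₁, h₂, h₃⟩, hlatin⟩ := hp
  have fiber :
      {q ∈ ({q | IsLatinTriple q.1 q.2.1 q.2.2} : Finset ((ι → α) × (ι → β) × (ι → γ))) |
        kernel q = p} =
      ({g | firstIndex g = p.1} : Finset (ι → α)) ×ˢ
        ({g | firstIndex g = p.2.1} : Finset (ι → β)) ×ˢ
        ({g | firstIndex g = p.2.2} : Finset (ι → γ)) := by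
    ext q
    simp only [mem_filter, mem_product, mem_univ, true_and, kernel, Prod.ext_iff]
    refine ⟨fun h => h.2, fun h => ⟨?_, h⟩⟩
    rw [← isLatinTriple_firstIndex_iff, h.1, h.2.1, h.2.2]
    exact hlatin
  rw [fiber, card_product, card_product, card_firstIndex_eq h₁, card_firstIndex_eq h₂,
    card_firstIndex_eq h₃, blockCounts]

end LatinTriples

section Tuples

variable {α : Type*} [DecidableEq α]

theorem injective_of_card_image_univ {ι : Type*} [Fintype ι] {f : ι → α}
    (h : #(univ.image f) = Fintype.card ι) : f.Injective := by
  rwa [← Set.injOn_univ, ← coe_univ, ← card_image_iff]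

theorem card_filter_image_univ_eq_factorial [Fintype α] {k : ℕ} (s : Finset α) (hs : #s = k) :
    #{f : Fin k → α | univ.image f = s} = k.factorial := by
  calc #{f : Fin k → α | univ.image f = s} = Fintype.card (Fin k ↪ s) := by
        refine card_bij' (fun f hf => ⟨fun i => ⟨f i, ?_⟩, fun i j hij => ?_⟩) (fun e _ i => e i)
          (fun _ _ => mem_univ _) (fun e _ => ?_) (fun _ _ => rfl) (fun _ _ => rfl)
        · rw [mem_filter] at hf
          exact hf.2 ▸ mem_image_of_mem f (mem_univ i)
        · rw [mem_filter] at hf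
          refine injective_of_card_image_univ ?_ (congrArg Subtype.val hij)
          rw [hf.2, hs, Fintype.card_fin]
        · have hinj : (fun i => (e i : α)).Injective := fun i j hij => e.injective (Subtype.ext hij)
          rw [mem_filter]
          refine ⟨mem_univ _, eq_of_subset_of_card_le (fun x hx => ?_) ?_⟩
          · obtain ⟨i, -, rfl⟩ := mem_image.1 hx
            exact (e i).2
          · rw [card_image_of_injective _ hinj, card_univ, Fintype.card_fin, hs]
    _ = k.factorial := by
        rw [Fintype.card_embedding_eq, Fintype.card_fin, Fintype.card_coe, hs,
          Nat.descFactorial_self]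

end Tuples

section PartialLatinRectangles

variable {r s n k : ℕ}

instance (E : Finset (Fin r × Fin s × Fin n)) : Decidable (IsPLR E) := by
  unfold IsPLR; infer_instance

theorem isLatinTriple_iff_isPLR_image {a : Fin k → Fin r} {b : Fin k → Fin s} {c : Fin k → Fin n} :
    IsLatinTriple a b c ↔
      (fun i => (a i, b i, c i)).Injective ∧ IsPLR (univ.image fun i => (a i, b i, c i)) := by
  rw [isLatinTriple_iff_forall]
  constructor
  · rintro ⟨hab, hac, hbc⟩
    refine ⟨fun i j hij => hab i j (congrArg (·.1) hij) (congrArg (·.2.1) hij), ?_⟩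
    simp only [IsPLR, mem_image, mem_univ, true_and]
    rintro _ ⟨i, rfl⟩ _ ⟨j, rfl⟩ hne
    have hij : i ≠ j := fun h => hne (h ▸ rfl)
    exact ⟨fun h => hij (hab i j h.1 h.2), fun h => hij (hac i j h.1 h.2),
      fun h => hij (hbc i j h.1 h.2)⟩
  · rintro ⟨hinj, hplr⟩
    have distinct (i j) (hij : i ≠ j) := hplr _ (mem_image_of_mem _ (mem_univ i)) _
      (mem_image_of_mem _ (mem_univ j)) (hinj.ne hij)
    refine ⟨fun i j h₁ h₂ => ?_, fun i j h₁ h₂ => ?_, fun i j h₁ h₂ => ?_⟩ <;> by_contra hij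
    exacts [(distinct i j hij).1 ⟨h₁, h₂⟩, (distinct i j hij).2.1 ⟨h₁, h₂⟩,
      (distinct i j hij).2.2 ⟨h₁, h₂⟩]

theorem numPLR_eq_card (r s n k : ℕ) :
    numPLR r s n k = #{E : Finset (Fin r × Fin s × Fin n) | IsPLR E ∧ #E = k} := by
  rw [numPLR, Nat.card_eq_fintype_card, Fintype.card_subtype]

theorem card_isLatinTriple_eq_factorial_mul_numPLR (r s n k : ℕ) :
    #{q : (Fin k → Fin r) × (Fin k → Fin s) × (Fin k → Fin n) | IsLatinTriple q.1 q.2.1 q.2.2} =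
      k.factorial * numPLR r s n k := by
  let support (q : (Fin k → Fin r) × (Fin k → Fin s) × (Fin k → Fin n)) :
      Finset (Fin r × Fin s × Fin n) := univ.image fun i => (q.1 i, q.2.1 i, q.2.2 i)
  have support_mem : ∀ q ∈ ({q | IsLatinTriple q.1 q.2.1 q.2.2} : Finset _),
      support q ∈ ({E | IsPLR E ∧ #E = k} : Finset _) := by
    intro q hq
    obtain ⟨hinj, hplr⟩ := isLatinTriple_iff_isPLR_image.1 (mem_filter.1 hq).2
    rw [mem_filter, card_image_of_injective _ hinj, card_univ, Fintype.card_fin]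
    exact ⟨mem_univ _, hplr, rfl⟩
  rw [numPLR_eq_card, card_eq_sum_card_fiberwise support_mem, mul_comm]
  refine sum_const_nat fun E hE => ?_
  obtain ⟨hplr, hcard⟩ := (mem_filter.1 hE).2
  rw [← card_filter_image_univ_eq_factorial E hcard]
  refine card_bij' (fun q _ i => (q.1 i, q.2.1 i, q.2.2 i))
    (fun f _ => (fun i => (f i).1, fun i => (f i).2.1, fun i => (f i).2.2))
    (fun q hq => ?_) (fun f hf => ?_) (fun _ _ => rfl) (fun _ _ => rfl)
  · simp only [mem_filter, mem_univ, true_and] at hq ⊢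
    exact hq.2
  · simp only [mem_filter, mem_univ, true_and] at hf ⊢
    refine ⟨isLatinTriple_iff_isPLR_image.2 ⟨?_, hf ▸ hplr⟩, hf⟩
    exact injective_of_card_image_univ (by rw [hf, hcard, Fintype.card_fin])

end PartialLatinRectangles

def permTriples (a b c : ℕ) : Finset (ℕ × ℕ × ℕ) :=
  {(a, b, c), (a, c, b), (b, a, c), (b, c, a), (c, a, b), (c, b, a)}

section PermTriples

variable {M : Type*} [AddCommMonoid M] (F : ℕ × ℕ × ℕ → M) {a b c : ℕ}

theorem sum_permTriples_aaa (a : ℕ) : ∑ t ∈ permTriples a a a, F t = F (a, a, a) := by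
  simp [permTriples]

theorem sum_permTriples_abb (h : a ≠ b) :
    ∑ t ∈ permTriples a b b, F t = F (a, b, b) + F (b, a, b) + F (b, b, a) := by
  simp [permTriples, h, h.symm, add_assoc]

theorem sum_permTriples_aab (h : a ≠ b) :
    ∑ t ∈ permTriples a a b, F t = F (a, a, b) + F (a, b, a) + F (b, a, a) := by
  simp [permTriples, h, h.symm, add_assoc]

theorem sum_permTriples_abc (hab : a ≠ b) (hac : a ≠ c) (hbc : b ≠ c) :
    ∑ t ∈ permTriples a b c, F t =
      F (a, b, c) + F (a, c, b) + F (b, a, c) + F (b, c, a) + F (c, a, b) + F (c, b, a) := by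
  simp [permTriples, hab, hac, hbc, hab.symm, hac.symm, hbc.symm, add_assoc]

end PermTriples

theorem sig_eq_sum_permTriples (r s n : ℤ) (a b c : ℕ) :
    sig r s n a b c = ∑ t ∈ permTriples a b c, r ^ t.1 * s ^ t.2.1 * n ^ t.2.2 :=
  rfl

theorem sum_latinKernels_fin_four {M : Type*} [AddCommMonoid M] (F : ℕ × ℕ × ℕ → M) :
    ∑ p ∈ latinKernels (Fin 4), F (blockCounts p) =
      ∑ t ∈ permTriples 1 4 4, F t + 6 • ∑ t ∈ permTriples 2 2 2, F t +
        12 • ∑ t ∈ permTriples 2 2 3, F t + 6 • ∑ t ∈ permTriples 2 2 4, F t +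
        60 • ∑ t ∈ permTriples 2 3 3, F t + 24 • ∑ t ∈ permTriples 2 3 4, F t +
        7 • ∑ t ∈ permTriples 2 4 4, F t + 120 • ∑ t ∈ permTriples 3 3 3, F t +
        30 • ∑ t ∈ permTriples 3 3 4, F t + 6 • ∑ t ∈ permTriples 3 4 4, F t +
        ∑ t ∈ permTriples 4 4 4, F t := by
  have tally : (latinKernels (Fin 4)).val.map blockCounts =
      (permTriples 1 4 4).val + 6 • (permTriples 2 2 2).val + 12 • (permTriples 2 2 3).val +
        6 • (permTriples 2 2 4).val + 60 • (permTriples 2 3 3).val +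
        24 • (permTriples 2 3 4).val + 7 • (permTriples 2 4 4).val +
        120 • (permTriples 3 3 3).val + 30 • (permTriples 3 3 4).val +
        6 • (permTriples 3 4 4).val + (permTriples 4 4 4).val := by
    -- `+kernel` leaves the evaluation over the 3375 candidates to the kernel alone.
    decide +kernel
  have sum_tally := congrArg (fun m => (m.map F).sum) tally
  simp only [Multiset.map_map, Function.comp_def, Multiset.map_add, Multiset.map_nsmul,
    Multiset.sum_add, Multiset.sum_nsmul, ← sum_eq_multiset_sum] at sum_tally
  exact sum_tally

theorem stmt6_general (r s n : ℕ) :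
    (24 : ℤ) * numPLR r s n 4 =
      (r : ℤ) * s * n *
        (sig r s n 3 3 3 - 6 * sig r s n 3 2 2 + 12 * sig r s n 2 2 2
          + 11 * sig r s n 3 1 1 + 30 * sig r s n 2 2 1 - 60 * sig r s n 2 1 1
          - 6 * sig r s n 3 0 0 - 36 * sig r s n 2 1 0 - 28 * sig r s n 1 1 1
          + 72 * sig r s n 2 0 0 + 198 * sig r s n 1 1 0 - 228 * sig r s n 1 0 0
          + 198) := by
  have count : 24 * numPLR r s n 4 = ∑ p ∈ latinKernels (Fin 4),
      r.descFactorial (blockCounts p).1 *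
        (s.descFactorial (blockCounts p).2.1 * n.descFactorial (blockCounts p).2.2) := by
    rw [show 24 = (4).factorial from rfl, ← card_isLatinTriple_eq_factorial_mul_numPLR,
      card_isLatinTriple_eq_sum]
    simp only [Fintype.card_fin]
  rw [← Nat.cast_ofNat, ← Nat.cast_mul, count, Nat.cast_sum]
  push_cast
  rw [sum_latinKernels_fin_four (fun t => (r.descFactorial t.1 : ℤ) *
    (s.descFactorial t.2.1 * n.descFactorial t.2.2))]
  simp (disch := decide) only [sig_eq_sum_permTriples, sum_permTriples_aaa,
    sum_permTriples_abb, sum_permTriples_aab, sum_permTriples_abc,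
    Nat.cast_descFactorial_eq_prod_range_sub, prod_range_succ, range_zero, prod_empty]
  ring

theorem stmt6 (r s n : ℕ) (hr : 0 < r) (hs : 0 < s) (hn : 0 < n) :
    (24 : ℤ) * numPLR r s n 4 =
      (r : ℤ) * s * n *
        (sig r s n 3 3 3 - 6 * sig r s n 3 2 2 + 12 * sig r s n 2 2 2
          + 11 * sig r s n 3 1 1 + 30 * sig r s n 2 2 1 - 60 * sig r s n 2 1 1
          - 6 * sig r s n 3 0 0 - 36 * sig r s n 2 1 0 - 28 * sig r s n 1 1 1
          + 72 * sig r s n 2 0 0 + 198 * sig r s n 1 1 0 - 228 * sig r s n 1 0 0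
          + 198) :=
  stmt6_general r s n
end

section
/- For every positive integer n, the number of n×n partial Latin rectangles based on n symbols of size 3 satisfies 6·|R_{n,n,n:3}| = n³·(n−1)²·(n⁴ + 2n³ − 6n² − 8n + 14). -/
open Finset

/-!
Each partial Latin rectangle of size 3 arises from exactly `3! = 6` ordered triples of pairwise
compatible cells, so it suffices to count those. In an `r × s` array with `n` symbols there are
`N = rsn` cells, and a cell conflicts with `K = r + s + n - 2` cells (itself included). Two
compatible cells have exactly two common conflicting cells when they share a row, column or
symbol, and none otherwise, so a compatible pair extends to a compatible triple in
`N - 2K + 2·[shared line]` ways. There are `N (N - K)` compatible ordered pairs, `N M` of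
which share a line, where `M = (s-1)(n-1) + (r-1)(n-1) + (r-1)(s-1)`; hence
`6 |R_{r,s,n:3}| = N (N - K) (N - 2K) + 2 N M`, which for `r = s = n` factors as stated.
-/

theorem card_filter_prod_eq_sum {ι κ : Type*} [Fintype ι] [Fintype κ] (P : ι × κ → Prop)
    [DecidablePred P] : #{x | P x} = ∑ i, #{j | P (i, j)} := by
  simp only [card_filter, Fintype.sum_prod_type]

theorem intCast_card_compl_singleton {ι : Type*} [Fintype ι] [DecidableEq ι] (i : ι) :
    (#({i}ᶜ : Finset ι) : ℤ) = Fintype.card ι - 1 := by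
  rw [card_compl, card_singleton, Nat.cast_sub (Fintype.card_pos_iff.mpr ⟨i⟩), Nat.cast_one]

theorem card_filter_triple_eq_of_card_eq_three {ι : Type*} [Fintype ι] [DecidableEq ι]
    {E : Finset ι} (hE : #E = 3) : #{t : (ι × ι) × ι | {t.1.1, t.1.2, t.2} = E} = 6 := by
  obtain ⟨a, b, c, hab, hac, hbc, rfl⟩ := card_eq_three.mp hE
  have horderings : ({t : (ι × ι) × ι | {t.1.1, t.1.2, t.2} = ({a, b, c} : Finset ι)} :
      Finset _) =
        {((a, b), c), ((a, c), b), ((b, a), c), ((b, c), a), ((c, a), b), ((c, b), a)} := by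
    ext ⟨⟨x, y⟩, z⟩
    simp only [mem_filter, mem_univ, true_and, mem_insert, mem_singleton, Prod.mk.injEq]
    constructor
    · intro h
      have mem (w : ι) : w = x ∨ w = y ∨ w = z ↔ w = a ∨ w = b ∨ w = c := by
        simpa using congrArg (w ∈ ·) h
      grind [mem x, mem y, mem z, mem a, mem b, mem c]
    · rintro (h | h | h | h | h | h) <;> obtain ⟨⟨rfl, rfl⟩, rfl⟩ := h <;> ext <;> simp <;>
        tauto
  rw [horderings]
  simp [hab, hac, hbc, hab.symm, hac.symm, hbc.symm]

namespace PartialLatin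

section Cells

variable {α β γ : Type*}

def Compatible (e f : α × β × γ) : Prop :=
  ¬(e.1 = f.1 ∧ e.2.1 = f.2.1) ∧ ¬(e.1 = f.1 ∧ e.2.2 = f.2.2) ∧
    ¬(e.2.1 = f.2.1 ∧ e.2.2 = f.2.2)

def SharesLine (e f : α × β × γ) : Prop :=
  e.1 = f.1 ∨ e.2.1 = f.2.1 ∨ e.2.2 = f.2.2

instance : Std.Symm (Compatible (α := α) (β := β) (γ := γ)) where
  symm _ _ h := by unfold Compatible at *; grind

theorem Compatible.ne {e f : α × β × γ} (h : Compatible e f) : e ≠ f := by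
  rintro rfl
  exact h.1 ⟨rfl, rfl⟩

variable [DecidableEq α] [DecidableEq β] [DecidableEq γ]

instance (e f : α × β × γ) : Decidable (Compatible e f) :=
  inferInstanceAs (Decidable (¬_ ∧ ¬_ ∧ ¬_))

instance (e f : α × β × γ) : Decidable (SharesLine e f) :=
  inferInstanceAs (Decidable (_ ∨ _ ∨ _))

variable [Fintype α] [Fintype β] [Fintype γ]

variable (α β γ) in
def compatibleTriples : Finset (((α × β × γ) × (α × β × γ)) × (α × β × γ)) :=
  {t | Compatible t.1.1 t.1.2 ∧ Compatible t.1.1 t.2 ∧ Compatible t.1.2 t.2}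

theorem card_filter_not_compatible (e : α × β × γ) :
    #{f | ¬Compatible e f} + 2 = Fintype.card α + Fintype.card β + Fintype.card γ := by
  obtain ⟨a, b, c⟩ := e
  have hlines : ({f | ¬Compatible (a, b, c) f} : Finset (α × β × γ)) =
      {a} ×ˢ {b} ×ˢ univ ∪ ({a} ×ˢ univ ×ˢ {c} ∪ univ ×ˢ {b} ×ˢ {c}) := by
    ext ⟨x, y, z⟩; simp [Compatible]; grind
  have h₁ : ({a} ×ˢ {b} ×ˢ univ ∩ ({a} ×ˢ univ ×ˢ {c} ∪ univ ×ˢ {b} ×ˢ {c}) :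
      Finset (α × β × γ)) = {(a, b, c)} := by
    ext ⟨x, y, z⟩; simp; grind
  have h₂ : ({a} ×ˢ univ ×ˢ {c} ∩ univ ×ˢ {b} ×ˢ {c} : Finset (α × β × γ)) =
      {(a, b, c)} := by
    ext ⟨x, y, z⟩; simp; grind
  have := card_union_add_card_inter ({a} ×ˢ {b} ×ˢ univ : Finset (α × β × γ))
    ({a} ×ˢ univ ×ˢ {c} ∪ univ ×ˢ {b} ×ˢ {c})
  have := card_union_add_card_inter ({a} ×ˢ univ ×ˢ {c} : Finset (α × β × γ))
    (univ ×ˢ {b} ×ˢ {c})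
  simp_all only [card_product, card_singleton, card_univ]
  omega

theorem card_filter_not_compatible_and_not_compatible {e₁ e₂ : α × β × γ}
    (h : Compatible e₁ e₂) :
    #{f | ¬Compatible e₁ f ∧ ¬Compatible e₂ f} = if SharesLine e₁ e₂ then 2 else 0 := by
  obtain ⟨a₁, b₁, c₁⟩ := e₁
  obtain ⟨a₂, b₂, c₂⟩ := e₂
  simp only [Compatible] at h
  by_cases ha : a₁ = a₂
  · subst ha
    have hs : SharesLine (a₁, b₁, c₁) (a₁, b₂, c₂) := Or.inl rfl
    rw [if_pos hs, card_eq_two]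
    refine ⟨(a₁, b₁, c₂), (a₁, b₂, c₁), by grind, ?_⟩
    ext ⟨x, y, z⟩; simp [Compatible]; grind
  by_cases hb : b₁ = b₂
  · subst hb
    have hs : SharesLine (a₁, b₁, c₁) (a₂, b₁, c₂) := Or.inr (Or.inl rfl)
    rw [if_pos hs, card_eq_two]
    refine ⟨(a₁, b₁, c₂), (a₂, b₁, c₁), by grind, ?_⟩
    ext ⟨x, y, z⟩; simp [Compatible]; grind
  by_cases hc : c₁ = c₂
  · subst hc
    have hs : SharesLine (a₁, b₁, c₁) (a₂, b₂, c₁) := Or.inr (Or.inr rfl)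
    rw [if_pos hs, card_eq_two]
    refine ⟨(a₁, b₂, c₁), (a₂, b₁, c₁), by grind, ?_⟩
    ext ⟨x, y, z⟩; simp [Compatible]; grind
  rw [if_neg (by simp only [SharesLine]; grind), card_eq_zero, filter_eq_empty_iff]
  simp only [Compatible]
  grind

local notation "N" => (Fintype.card α * Fintype.card β * Fintype.card γ : ℤ)
local notation "K" => (Fintype.card α + Fintype.card β + Fintype.card γ - 2 : ℤ)
local notation "M" => ((Fintype.card β - 1) * (Fintype.card γ - 1) +
  (Fintype.card α - 1) * (Fintype.card γ - 1) +
  (Fintype.card α - 1) * (Fintype.card β - 1) : ℤ)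

theorem card_filter_compatible (e : α × β × γ) : (#{f | Compatible e f} : ℤ) = N - K := by
  have hsplit := card_filter_add_card_filter_not (s := univ) (Compatible e)
  have hnot := card_filter_not_compatible e
  rw [card_univ, Fintype.card_prod, Fintype.card_prod, ← mul_assoc] at hsplit
  zify at hsplit hnot
  linarith

theorem card_filter_compatible_and_compatible {e₁ e₂ : α × β × γ}
    (h : Compatible e₁ e₂) :
    (#{f | Compatible e₁ f ∧ Compatible e₂ f} : ℤ) =
      N - 2 * K + if SharesLine e₁ e₂ then 2 else 0 := by
  have hsplit := card_filter_add_card_filter_not (s := univ)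
    (fun f => Compatible e₁ f ∧ Compatible e₂ f)
  simp only [not_and_or, filter_or] at hsplit
  have hunion := card_union_add_card_inter (univ.filter (¬Compatible e₁ ·))
    (univ.filter (¬Compatible e₂ ·))
  rw [← filter_and, card_filter_not_compatible_and_not_compatible h] at hunion
  have h₁ := card_filter_not_compatible e₁
  have h₂ := card_filter_not_compatible e₂
  rw [card_univ, Fintype.card_prod, Fintype.card_prod, ← mul_assoc] at hsplit
  zify at hsplit hunion h₁ h₂
  linarith

theorem card_filter_compatible_and_sharesLine (e : α × β × γ) :
    (#{f | Compatible e f ∧ SharesLine e f} : ℤ) = M := by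
  obtain ⟨a, b, c⟩ := e
  have hsplit :
      ({f | Compatible (a, b, c) f ∧ SharesLine (a, b, c) f} : Finset (α × β × γ)) =
      {a} ×ˢ (({b}ᶜ : Finset β) ×ˢ ({c}ᶜ : Finset γ)) ∪
        (({a}ᶜ : Finset α) ×ˢ ({b} ×ˢ {c}ᶜ) ∪ {a}ᶜ ×ˢ ({b}ᶜ ×ˢ {c})) := by
    ext ⟨x, y, z⟩; simp [Compatible, SharesLine]; grind
  rw [hsplit, card_union_of_disjoint, card_union_of_disjoint]
  · simp only [card_product, card_singleton, Nat.cast_add, Nat.cast_mul, Nat.cast_one,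
      intCast_card_compl_singleton]
    ring
  all_goals rw [disjoint_left]; simp; grind

theorem card_compatible_pairs :
    (#{p : (α × β × γ) × (α × β × γ) | Compatible p.1 p.2} : ℤ) = N * (N - K) := by
  rw [card_filter_prod_eq_sum, Nat.cast_sum]
  simp only [card_filter_compatible, sum_const, card_univ, Fintype.card_prod, nsmul_eq_mul]
  push_cast
  ring

theorem card_compatible_sharesLine_pairs :
    (#{p : (α × β × γ) × (α × β × γ) |
        Compatible p.1 p.2 ∧ SharesLine p.1 p.2} : ℤ) = N * M := by
  rw [card_filter_prod_eq_sum, Nat.cast_sum]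
  simp only [card_filter_compatible_and_sharesLine, sum_const, card_univ, Fintype.card_prod,
    nsmul_eq_mul]
  push_cast
  ring

theorem card_compatibleTriples :
    (#(compatibleTriples α β γ) : ℤ) = N * (N - K) * (N - 2 * K) + 2 * N * M := by
  have hextensions (p : (α × β × γ) × (α × β × γ)) :
      (#{f | Compatible p.1 p.2 ∧ Compatible p.1 f ∧ Compatible p.2 f} : ℤ) =
        if Compatible p.1 p.2 then N - 2 * K + if SharesLine p.1 p.2 then 2 else 0 else 0 := by
    by_cases hp : Compatible p.1 p.2
    · simp only [hp, true_and, if_true, card_filter_compatible_and_compatible hp]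
    · simp [hp]
  rw [compatibleTriples, card_filter_prod_eq_sum, Nat.cast_sum,
    sum_congr rfl fun p _ => hextensions p, ← sum_filter, sum_add_distrib, sum_const,
    ← sum_filter, sum_const, filter_filter, nsmul_eq_mul, nsmul_eq_mul, card_compatible_pairs,
    card_compatible_sharesLine_pairs]
  ring

end Cells

variable {r s n : ℕ}

instance (E : Finset (Fin r × Fin s × Fin n)) : Decidable (IsPLR E) := by
  unfold IsPLR
  infer_instance

theorem isPLR_iff_pairwise (E : Finset (Fin r × Fin s × Fin n)) :
    IsPLR E ↔ (E : Set (Fin r × Fin s × Fin n)).Pairwise Compatible := Iff.rfl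

theorem isPLR_triple_and_card_eq_three_iff {a b c : Fin r × Fin s × Fin n} :
    IsPLR {a, b, c} ∧ #{a, b, c} = 3 ↔
      Compatible a b ∧ Compatible a c ∧ Compatible b c := by
  rw [card_triple_eq_three_iff, isPLR_iff_pairwise, coe_insert, coe_insert, coe_singleton,
    Set.pairwise_insert_of_symm, Set.pairwise_insert_of_symm]
  simp only [Set.pairwise_singleton, Set.mem_insert_iff, Set.mem_singleton_iff,
    forall_eq_or_imp, forall_eq, true_and]
  constructor
  · rintro ⟨⟨hbc, hab, hac⟩, hab', hac', hbc'⟩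
    exact ⟨hab hab', hac hac', hbc hbc'⟩
  · rintro ⟨hab, hac, hbc⟩
    exact ⟨⟨fun _ => hbc, fun _ => hab, fun _ => hac⟩, hab.ne, hac.ne, hbc.ne⟩

theorem six_mul_numPLR_three_eq_card (r s n : ℕ) :
    6 * numPLR r s n 3 = #(compatibleTriples (Fin r) (Fin s) (Fin n)) := by
  rw [numPLR, Nat.card_eq_fintype_card, Fintype.card_subtype]
  have hmaps : ∀ t ∈ compatibleTriples (Fin r) (Fin s) (Fin n),
      ({t.1.1, t.1.2, t.2} : Finset _) ∈ ({E | IsPLR E ∧ #E = 3} : Finset _) := by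
    intro t ht
    simpa only [compatibleTriples, mem_filter, mem_univ, true_and,
      isPLR_triple_and_card_eq_three_iff] using ht
  have hfiber : ∀ E ∈ ({E | IsPLR E ∧ #E = 3} : Finset (Finset (Fin r × Fin s × Fin n))),
      #{t ∈ compatibleTriples (Fin r) (Fin s) (Fin n) | {t.1.1, t.1.2, t.2} = E} = 6 := by
    intro E hE
    rw [mem_filter] at hE
    rw [compatibleTriples, filter_filter, ← card_filter_triple_eq_of_card_eq_three hE.2.2]
    refine congrArg card (filter_congr fun t _ => ⟨fun h => h.2, fun h => ⟨?_, h⟩⟩)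
    rw [← isPLR_triple_and_card_eq_three_iff, h]
    exact hE.2
  rw [card_eq_sum_card_fiberwise hmaps, sum_congr rfl hfiber, sum_const, smul_eq_mul, mul_comm]

theorem six_mul_numPLR_three (r s n : ℕ) :
    (6 : ℤ) * numPLR r s n 3 =
      r * s * n * (r * s * n - (r + s + n - 2)) * (r * s * n - 2 * (r + s + n - 2)) +
        2 * (r * s * n) * ((s - 1) * (n - 1) + (r - 1) * (n - 1) + (r - 1) * (s - 1)) := by
  rw [← Nat.cast_ofNat, ← Nat.cast_mul, six_mul_numPLR_three_eq_card, card_compatibleTriples]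
  simp only [Fintype.card_fin]

end PartialLatin

theorem stmt10_general (n : ℕ) :
    (6 : ℤ) * numPLR n n n 3 = (n : ℤ) ^ 3 * ((n : ℤ) - 1) ^ 2 * ((n : ℤ) ^ 4 + 2 * (n : ℤ) ^ 3 - 6 * (n : ℤ) ^ 2 - 8 * (n : ℤ) + 14) := by
  rw [PartialLatin.six_mul_numPLR_three]
  ring

theorem stmt10 (n : ℕ) (hn : 0 < n) :
    (6 : ℤ) * numPLR n n n 3 = (n : ℤ) ^ 3 * ((n : ℤ) - 1) ^ 2 * ((n : ℤ) ^ 4 + 2 * (n : ℤ) ^ 3 - 6 * (n : ℤ) ^ 2 - 8 * (n : ℤ) + 14) :=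
  stmt10_general n
end

section
/- Let P be a regular partial Latin square of order n of size m. Then the sum of the following three quantities is at most m: the number of rows of P containing exactly one non-empty cell, the number of columns of P containing exactly one non-empty cell, and the number of symbols occurring exactly once in P. Equivalently, if this sum exceeds m, then P is not regular. -/
open Finset

/-- A partial Latin square (given by its entry set `E`) is regular if (i) no non-empty cell
is simultaneously the only non-empty cell of its row and the only non-empty cell of its
column, and (ii) whenever a row or a column contains exactly one non-empty cell, the symbol
occupying that cell occurs at least twice. -/
def IsRegularPLS {n : ℕ} (E : Finset (Fin n × Fin n × Fin n)) : Prop :=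
  (∀ e ∈ E, ¬(rowType E e.1 = 1 ∧ colType E e.2.1 = 1)) ∧
  (∀ e ∈ E, (rowType E e.1 = 1 ∨ colType E e.2.1 = 1) → 2 ≤ symType E e.2.2)

/-!
Each row, column or symbol occurring exactly once is witnessed by a unique entry. Condition (i)
makes the entries witnessing rows and columns distinct, and condition (ii) makes them distinct
from those witnessing symbols, so there are at most `m` witnesses in total.
-/

lemma card_filter_card_fiber_eq_one {α β : Type*} [Fintype β] [DecidableEq β]
    (E : Finset α) (f : α → β) :
    #{b | #{e ∈ E | f e = b} = 1} = #{e ∈ E | #{e' ∈ E | f e' = f e} = 1} := by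
  symm
  refine card_nbij f (fun e he => ?_) (fun e he e' he' hf => ?_) (fun b hb => ?_)
  · simpa using (mem_filter.1 he).2
  · have hfiber := (mem_filter.1 (mem_coe.1 he)).2.le
    exact card_le_one.1 hfiber e (mem_filter.2 ⟨(mem_filter.1 he).1, rfl⟩)
      e' (mem_filter.2 ⟨(mem_filter.1 he').1, hf.symm⟩)
  · have hb : #{e ∈ E | f e = b} = 1 := (mem_filter.1 hb).2
    obtain ⟨a, ha⟩ := card_eq_one.1 hb
    have hab : a ∈ E ∧ f a = b := mem_filter.1 (ha ▸ mem_singleton_self a)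
    exact ⟨a, mem_filter.2 ⟨hab.1, hab.2 ▸ hb⟩, hab.2⟩

theorem stmt15_general (n m : ℕ) (E : Finset (Fin n × Fin n × Fin n))
    (hreg : IsRegularPLS E) (hm : E.card = m) :
    (Finset.univ.filter (fun i => rowType E i = 1)).card +
      (Finset.univ.filter (fun j => colType E j = 1)).card +
      (Finset.univ.filter (fun k => symType E k = 1)).card ≤ m := by
  obtain ⟨hrow_col, hsym⟩ := hreg
  set R := E.filter (fun e => rowType E e.1 = 1)
  set C := E.filter (fun e => colType E e.2.1 = 1)
  set S := E.filter (fun e => symType E e.2.2 = 1)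
  have hR : #{i | rowType E i = 1} = #R := card_filter_card_fiber_eq_one E (·.1)
  have hC : #{j | colType E j = 1} = #C := card_filter_card_fiber_eq_one E (·.2.1)
  have hS : #{k | symType E k = 1} = #S := card_filter_card_fiber_eq_one E (·.2.2)
  have hRC : Disjoint R C := disjoint_filter.2 fun e he hr hc => hrow_col e he ⟨hr, hc⟩
  have hRCS : Disjoint (R ∪ C) S := by
    rw [← filter_or]
    exact disjoint_filter.2 fun e he hrc hs => by have := hsym e he hrc; omega
  calc #{i | rowType E i = 1} + #{j | colType E j = 1} + #{k | symType E k = 1}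
      = #(R ∪ C ∪ S) := by
        rw [hR, hC, hS, card_union_of_disjoint hRCS, card_union_of_disjoint hRC]
    _ ≤ #E := card_le_card (union_subset (union_subset (filter_subset _ _) (filter_subset _ _))
        (filter_subset _ _))
    _ = m := hm

theorem stmt15 (n m : ℕ) (E : Finset (Fin n × Fin n × Fin n)) (hE : IsPLR E)
    (hreg : IsRegularPLS E) (hm : E.card = m) :
    (Finset.univ.filter (fun i => rowType E i = 1)).card +
      (Finset.univ.filter (fun j => colType E j = 1)).card +
      (Finset.univ.filter (fun k => symType E k = 1)).card ≤ m :=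
  stmt15_general n m E hreg hm
end
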